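/- Under the assumptions 2n_j < N_j (j = 1,2), Ψ(ζ_ℓ) > 0 for all ℓ, and c_k the moments of a positive Φ_o, the dual functional J_ν(Q) = (1/|N|) Σ_{ℓ∈Z²_N} (1/(ν−1)) Ψ(ζ_ℓ)/Q(ζ_ℓ)^{ν−1} + Σ_{k∈Λ} q_k c_k (for integer 1 < ν < ∞) attains a unique minimizer over the open set of trigonometric polynomials Q with coefficient support Λ that are strictly positive on the grid Z²_N. -/

import Mathlib

/-!
By Parseval, `∑ₖ q_k c_k = |N|⁻¹ ∑_ℓ Q(ζ_ℓ) Φₒ(ℓ)`, so `J_ν(Q)` is a sum over the grid of the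
functions `t ↦ a_ℓ / t^(ν-1) + b_ℓ t` evaluated at `t = Q(ζ_ℓ)`; each is strictly convex on
`t > 0` and blows up at `0` and `∞`. Since `2 n_j < N_j`, the characters `ζ^k`, `k ∈ Λ`, are
orthogonal on the grid, so `q` is recovered from the grid values and
`|q_k| ≤ |N|⁻¹ ∑_ℓ |Q(ζ_ℓ)|`. Hence a sublevel set of `J_ν` is a compact subset of `B₊(N)`,
which gives a minimizer, and `J_ν` is strictly convex on `B₊(N)`, which makes it unique.
-/
open Complex Finset

theorem existsUnique_isMinOn_of_strictConvexOn {E : Type*} [AddCommGroup E] [Module ℝ E]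
    [TopologicalSpace E] {s K : Set E} {f : E → ℝ} {x₀ : E} (hf : StrictConvexOn ℝ s f)
    (hx₀ : x₀ ∈ s) (hK : IsCompact K) (hKs : K ⊆ s) (hfK : ContinuousOn f K)
    (hsub : ∀ x ∈ s, f x ≤ f x₀ → x ∈ K) :
    ∃! x, x ∈ s ∧ ∀ y ∈ s, f x ≤ f y := by
  have hx₀K := hsub x₀ hx₀ le_rfl
  obtain ⟨x, hxK, hxmin⟩ := hK.exists_isMinOn ⟨x₀, hx₀K⟩ hfK
  have hmin : ∀ y ∈ s, f x ≤ f y := fun y hy => by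
    by_cases hy₀ : f y ≤ f x₀
    · exact hxmin (hsub y hy hy₀)
    · exact (hxmin hx₀K).trans (not_le.1 hy₀).le
  refine ⟨x, ⟨hKs hxK, hmin⟩, fun y ⟨hy, hymin⟩ => ?_⟩
  exact hf.eq_of_isMinOn (isMinOn_iff.2 hymin) (isMinOn_iff.2 hmin) hy (hKs hxK)

theorem strictConvexOn_sum_comp {ι E F : Type*} [AddCommGroup E] [Module ℝ E] [FunLike F E ℝ]
    [LinearMapClass F ℝ E ℝ] {s : Set E} {t : Set ℝ} {G : Finset ι} {L : ι → F}
    {g : ι → ℝ → ℝ} (hs : Convex ℝ s) (hg : ∀ i ∈ G, StrictConvexOn ℝ t (g i))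
    (hst : ∀ x ∈ s, ∀ i ∈ G, L i x ∈ t)
    (hinj : ∀ x ∈ s, ∀ y ∈ s, (∀ i ∈ G, L i x = L i y) → x = y) :
    StrictConvexOn ℝ s fun x => ∑ i ∈ G, g i (L i x) := by
  refine ⟨hs, fun x hx y hy hxy a b ha hb hab => ?_⟩
  obtain ⟨i₀, hi₀, hne⟩ : ∃ i ∈ G, L i x ≠ L i y := by
    by_contra! h
    exact hxy (hinj x hx y hy h)
  simp only [smul_eq_mul, mul_sum, ← sum_add_distrib, map_add, map_smul]
  refine sum_lt_sum (fun i hi => ?_) ⟨i₀, hi₀, ?_⟩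
  · exact (hg i hi).convexOn.2 (hst x hx i hi) (hst y hy i hi) ha.le hb.le hab
  · exact (hg i₀ hi₀).2 (hst x hx i₀ hi₀) (hst y hy i₀ hi₀) hne ha hb hab

theorem strictConvexOn_div_pow_add_mul {a : ℝ} (ha : 0 < a) {m : ℕ} (hm : m ≠ 0) (b : ℝ) :
    StrictConvexOn ℝ (Set.Ioi 0) fun t => a / t ^ m + t * b := by
  refine ⟨convex_Ioi 0, fun x hx y hy hxy u v hu hv huv => ?_⟩
  have h := (strictConvexOn_zpow (m := -(m : ℤ)) (by omega) (by omega)).2 hx hy hxy hu hv huv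
  simp only [smul_eq_mul, zpow_neg, zpow_natCast] at h ⊢
  simp only [div_eq_mul_inv]
  linear_combination mul_lt_mul_of_pos_left h ha

theorem mem_Icc_of_div_pow_add_mul_le {a b C t : ℝ} {m : ℕ} (ha : 0 < a) (hb : 0 < b)
    (hm : m ≠ 0) (ht : 0 < t) (hC : a / t ^ m + t * b ≤ C) :
    t ∈ Set.Icc (min 1 (a / C)) (C / b) := by
  have hpow : 0 < t ^ m := pow_pos ht m
  have hlin : t * b ≤ C := by linarith [div_pos ha hpow]
  have hC₀ : 0 < C := lt_of_lt_of_le (mul_pos ht hb) hlin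
  refine ⟨?_, (le_div_iff₀ hb).2 hlin⟩
  rcases le_or_gt 1 t with h1 | h1
  · exact (min_le_left _ _).trans h1
  · have hat : a / C ≤ t ^ m := by
      rw [div_le_iff₀ hC₀, ← div_le_iff₀' hpow]
      linarith [mul_pos ht hb]
    exact (min_le_right _ _).trans (hat.trans (pow_le_of_le_one ht.le h1.le hm))

noncomputable section

/-- `ζ_ℓ^k` for the grid point `ζ_ℓ = (e^{2πi ℓ₁/N₁}, e^{2πi ℓ₂/N₂})`. -/
def gridChar (N₁ N₂ : ℕ) (k : ℤ × ℤ) (ℓ : ℕ × ℕ) : ℂ :=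
  exp (I * k.1 * ℓ.1 * (2 * Real.pi / N₁)) * exp (I * k.2 * ℓ.2 * (2 * Real.pi / N₂))

-- Reducible, so that they unify with the explicit index sets of the statement.
abbrev freqBox (n₁ n₂ : ℕ) : Finset (ℤ × ℤ) := Icc (-(n₁ : ℤ)) n₁ ×ˢ Icc (-(n₂ : ℤ)) n₂

abbrev grid (N₁ N₂ : ℕ) : Finset (ℕ × ℕ) := range N₁ ×ˢ range N₂

end

section Fourier

variable {N₁ N₂ : ℕ}

theorem gridChar_add (k k' : ℤ × ℤ) (ℓ : ℕ × ℕ) :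
    gridChar N₁ N₂ (k + k') ℓ = gridChar N₁ N₂ k ℓ * gridChar N₁ N₂ k' ℓ := by
  simp only [gridChar, ← exp_add, Prod.fst_add, Prod.snd_add]
  congr 1
  push_cast
  ring

theorem norm_gridChar (k : ℤ × ℤ) (ℓ : ℕ × ℕ) : ‖gridChar N₁ N₂ k ℓ‖ = 1 := by
  simp [gridChar, norm_exp]

theorem conj_gridChar (k : ℤ × ℤ) (ℓ : ℕ × ℕ) :
    (starRingEnd ℂ) (gridChar N₁ N₂ k ℓ) = gridChar N₁ N₂ (-k) ℓ := by
  simp only [gridChar, map_mul, ← exp_conj, conj_I, map_div₀, conj_ofReal, map_natCast,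
    map_intCast, map_ofNat, Prod.fst_neg, Prod.snd_neg, Int.cast_neg]
  congr 2 <;> ring

theorem sum_range_exp_mul_two_pi_div {N : ℕ} (hN : N ≠ 0) {m : ℤ} (hm : m.natAbs < N) :
    ∑ ℓ ∈ range N, exp (I * m * ℓ * (2 * Real.pi / N)) = if m = 0 then (N : ℂ) else 0 := by
  set ω := exp (2 * Real.pi * I / N) with hω_def
  have hω : IsPrimitiveRoot ω N := isPrimitiveRoot_exp N hN
  have hexp : ∀ ℓ : ℕ, exp (I * m * ℓ * (2 * Real.pi / N)) = (ω ^ m) ^ ℓ := fun ℓ => by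
    rw [hω_def, ← exp_int_mul, ← exp_nat_mul]
    congr 1
    ring
  simp_rw [hexp]
  split_ifs with h0
  · simp [h0]
  · have hne : ω ^ m ≠ 1 := fun h =>
      h0 (Int.eq_zero_of_dvd_of_natAbs_lt_natAbs ((hω.zpow_eq_one_iff_dvd m).1 h) (by simpa))
    rw [geom_sum_eq hne, ← zpow_natCast, ← zpow_mul, mul_comm, zpow_mul, zpow_natCast,
      hω.pow_eq_one, one_zpow, sub_self, zero_div]

theorem sum_grid_gridChar (hN₁ : N₁ ≠ 0) (hN₂ : N₂ ≠ 0) {k : ℤ × ℤ} (hk₁ : k.1.natAbs < N₁)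
    (hk₂ : k.2.natAbs < N₂) :
    ∑ ℓ ∈ grid N₁ N₂, gridChar N₁ N₂ k ℓ = if k = 0 then (N₁ * N₂ : ℂ) else 0 := by
  simp only [grid, sum_product, gridChar, ← mul_sum, ← sum_mul]
  rw [sum_range_exp_mul_two_pi_div hN₁ hk₁, sum_range_exp_mul_two_pi_div hN₂ hk₂]
  obtain ⟨k₁, k₂⟩ := k
  by_cases h₁ : k₁ = 0 <;> by_cases h₂ : k₂ = 0 <;> simp [h₁, h₂]

variable {n₁ n₂ : ℕ}

theorem sum_grid_gridChar_mul_gridChar_neg (h₁ : 2 * n₁ < N₁) (h₂ : 2 * n₂ < N₂)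
    {k k' : ℤ × ℤ} (hk : k ∈ freqBox n₁ n₂) (hk' : k' ∈ freqBox n₁ n₂) :
    ∑ ℓ ∈ grid N₁ N₂, gridChar N₁ N₂ k' ℓ * gridChar N₁ N₂ (-k) ℓ =
      if k' = k then (N₁ * N₂ : ℂ) else 0 := by
  simp only [freqBox, mem_product, mem_Icc] at hk hk'
  simp only [← gridChar_add]
  rw [sum_grid_gridChar (by omega) (by omega)
    (by simp only [Prod.fst_add, Prod.fst_neg]; omega)
    (by simp only [Prod.snd_add, Prod.snd_neg]; omega)]
  simp [add_neg_eq_zero]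

theorem sum_grid_sum_mul_gridChar_neg (h₁ : 2 * n₁ < N₁) (h₂ : 2 * n₂ < N₂)
    (q : ℤ × ℤ → ℝ) {k : ℤ × ℤ} (hk : k ∈ freqBox n₁ n₂) :
    ∑ ℓ ∈ grid N₁ N₂, (∑ k' ∈ freqBox n₁ n₂, (q k' : ℂ) * gridChar N₁ N₂ k' ℓ) *
      gridChar N₁ N₂ (-k) ℓ = N₁ * N₂ * q k := by
  simp only [sum_mul, mul_assoc]
  rw [sum_comm]
  simp only [← mul_sum]
  rw [sum_congr rfl fun k' hk' => by rw [sum_grid_gridChar_mul_gridChar_neg h₁ h₂ hk hk']]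
  simp [hk, mul_comm, mul_left_comm]

end Fourier

noncomputable section

/-- The real part of `Q(ζ_ℓ)`, as a continuous linear functional of the coefficients `q`. -/
def gridEval (Λ : Finset (ℤ × ℤ)) (N₁ N₂ : ℕ) (ℓ : ℕ × ℕ) : (ℤ × ℤ → ℝ) →L[ℝ] ℝ :=
  ∑ k ∈ Λ, (gridChar N₁ N₂ k ℓ).re • ContinuousLinearMap.proj k

/-- The paper's `B₊(N)` for the support `Λ`. -/
def posTrigPolys (Λ : Finset (ℤ × ℤ)) (N₁ N₂ : ℕ) : Set (ℤ × ℤ → ℝ) :=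
  {q | (∀ k, q k = q (-k)) ∧ (∀ k ∉ Λ, q k = 0) ∧ ∀ ℓ ∈ grid N₁ N₂, 0 < gridEval Λ N₁ N₂ ℓ q}

/-- `J_ν` after Parseval, with weights `a_ℓ = Ψ(ℓ) / ((ν - 1)|N|)` and `b_ℓ = Φₒ(ℓ) / |N|`. -/
def dualFunctional (Λ : Finset (ℤ × ℤ)) (N₁ N₂ m : ℕ) (a b : ℕ × ℕ → ℝ)
    (q : ℤ × ℤ → ℝ) : ℝ :=
  ∑ ℓ ∈ grid N₁ N₂, (a ℓ / gridEval Λ N₁ N₂ ℓ q ^ m + gridEval Λ N₁ N₂ ℓ q * b ℓ)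

end

section TrigPoly

variable {Λ : Finset (ℤ × ℤ)} {N₁ N₂ : ℕ}

theorem gridEval_apply (ℓ : ℕ × ℕ) (q : ℤ × ℤ → ℝ) :
    gridEval Λ N₁ N₂ ℓ q = (∑ k ∈ Λ, (q k : ℂ) * gridChar N₁ N₂ k ℓ).re := by
  simp [gridEval, re_sum, mul_comm]

theorem ofReal_gridEval (hΛ : ∀ k, -k ∈ Λ ↔ k ∈ Λ) {q : ℤ × ℤ → ℝ} (hq : ∀ k, q k = q (-k))
    (ℓ : ℕ × ℕ) : (gridEval Λ N₁ N₂ ℓ q : ℂ) = ∑ k ∈ Λ, (q k : ℂ) * gridChar N₁ N₂ k ℓ := by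
  rw [gridEval_apply, ← conj_eq_iff_re, map_sum]
  refine sum_equiv (Equiv.neg _) (fun k => (hΛ k).symm) fun k _ => ?_
  rw [map_mul, conj_ofReal, conj_gridChar, Equiv.neg_apply, hq k]

theorem sum_mul_eq_sum_gridEval_mul {Φ : ℕ × ℕ → ℝ} {c : ℤ × ℤ → ℝ}
    (hc : ∀ k, (c k : ℂ) = 1 / ((N₁ : ℂ) * N₂) * ∑ ℓ ∈ grid N₁ N₂, gridChar N₁ N₂ k ℓ * Φ ℓ)
    (q : ℤ × ℤ → ℝ) :
    ∑ k ∈ Λ, q k * c k = 1 / ((N₁ : ℝ) * N₂) * ∑ ℓ ∈ grid N₁ N₂, gridEval Λ N₁ N₂ ℓ q * Φ ℓ := by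
  have h := congrArg re (show (∑ k ∈ Λ, (q k : ℂ) * c k) =
      1 / ((N₁ : ℂ) * N₂) * ∑ ℓ ∈ grid N₁ N₂, (∑ k ∈ Λ, (q k : ℂ) * gridChar N₁ N₂ k ℓ) * Φ ℓ by
    simp only [hc, mul_sum, sum_mul]
    rw [sum_comm]
    exact sum_congr rfl fun _ _ => sum_congr rfl fun _ _ => by ring)
  simpa [re_sum, gridEval_apply, ← ofReal_natCast, ← ofReal_mul, ← ofReal_one, ← ofReal_div] using h

theorem convex_posTrigPolys : Convex ℝ (posTrigPolys Λ N₁ N₂) := by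
  rintro x ⟨hx, hxΛ, hxpos⟩ y ⟨hy, hyΛ, hypos⟩ a b ha hb hab
  refine ⟨fun k => ?_, fun k hk => ?_, fun ℓ hℓ => ?_⟩
  · simp [hx k, hy k]
  · simp [hxΛ k hk, hyΛ k hk]
  · simpa using convex_Ioi (0 : ℝ) (hxpos ℓ hℓ) (hypos ℓ hℓ) ha hb hab

theorem single_zero_mem_posTrigPolys (h0 : (0 : ℤ × ℤ) ∈ Λ) :
    Pi.single 0 1 ∈ posTrigPolys Λ N₁ N₂ := by
  refine ⟨fun k => ?_, fun k hk => ?_, fun ℓ _ => ?_⟩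
  · simp [Pi.single_apply, neg_eq_zero]
  · exact Pi.single_eq_of_ne (by rintro rfl; exact hk h0) 1
  · simp [gridEval_apply, Pi.single_apply, h0, gridChar]

end TrigPoly

section Coercivity

variable {n₁ n₂ N₁ N₂ : ℕ}

theorem neg_mem_freqBox (k : ℤ × ℤ) : -k ∈ freqBox n₁ n₂ ↔ k ∈ freqBox n₁ n₂ := by
  simp only [freqBox, mem_product, mem_Icc, Prod.fst_neg, Prod.snd_neg]
  omega

theorem abs_mul_le_sum_abs_gridEval (h₁ : 2 * n₁ < N₁) (h₂ : 2 * n₂ < N₂) {q : ℤ × ℤ → ℝ}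
    (hq : ∀ k, q k = q (-k)) (hsupp : ∀ k ∉ freqBox n₁ n₂, q k = 0) (k : ℤ × ℤ) :
    |q k| * (N₁ * N₂) ≤ ∑ ℓ ∈ grid N₁ N₂, |gridEval (freqBox n₁ n₂) N₁ N₂ ℓ q| := by
  by_cases hk : k ∈ freqBox n₁ n₂
  · have hinv : (N₁ * N₂ * q k : ℂ) = ∑ ℓ ∈ grid N₁ N₂,
        (gridEval (freqBox n₁ n₂) N₁ N₂ ℓ q : ℂ) * gridChar N₁ N₂ (-k) ℓ := by
      simp only [ofReal_gridEval neg_mem_freqBox hq]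
      exact (sum_grid_sum_mul_gridChar_neg h₁ h₂ q hk).symm
    calc |q k| * (N₁ * N₂) = ‖(N₁ * N₂ * q k : ℂ)‖ := by
          rw [norm_mul, norm_mul, norm_real, Real.norm_eq_abs, norm_natCast, norm_natCast,
            mul_comm]
      _ ≤ ∑ ℓ ∈ grid N₁ N₂, |gridEval (freqBox n₁ n₂) N₁ N₂ ℓ q| := by
          rw [hinv]
          refine (norm_sum_le _ _).trans_eq (sum_congr rfl fun ℓ _ => ?_)
          rw [norm_mul, norm_gridChar, mul_one, norm_real, Real.norm_eq_abs]
  · rw [hsupp k hk, abs_zero, zero_mul]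
    exact sum_nonneg fun ℓ _ => abs_nonneg _

theorem eq_of_forall_gridEval_eq (h₁ : 2 * n₁ < N₁) (h₂ : 2 * n₂ < N₂) {x y : ℤ × ℤ → ℝ}
    (hx : ∀ k, x k = x (-k)) (hxsupp : ∀ k ∉ freqBox n₁ n₂, x k = 0)
    (hy : ∀ k, y k = y (-k)) (hysupp : ∀ k ∉ freqBox n₁ n₂, y k = 0)
    (hxy : ∀ ℓ ∈ grid N₁ N₂, gridEval (freqBox n₁ n₂) N₁ N₂ ℓ x =
      gridEval (freqBox n₁ n₂) N₁ N₂ ℓ y) : x = y := by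
  funext k
  have h := abs_mul_le_sum_abs_gridEval h₁ h₂ (q := x - y) (fun k => by simp [hx k, hy k])
    (fun k hk => by simp [hxsupp k hk, hysupp k hk]) k
  rw [sum_eq_zero fun ℓ hℓ => by rw [map_sub, hxy ℓ hℓ, sub_self, abs_zero]] at h
  have : 0 < N₁ := by omega
  have : 0 < N₂ := by omega
  exact sub_eq_zero.1 (abs_nonpos_iff.1 (nonpos_of_mul_nonpos_left h (by positivity)))

theorem isCompact_setOf_gridEval_mem_Icc (h₁ : 2 * n₁ < N₁) (h₂ : 2 * n₂ < N₂)
    (δ M : ℕ × ℕ → ℝ) :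
    IsCompact {q : ℤ × ℤ → ℝ | (∀ k, q k = q (-k)) ∧ (∀ k ∉ freqBox n₁ n₂, q k = 0) ∧
      ∀ ℓ ∈ grid N₁ N₂, gridEval (freqBox n₁ n₂) N₁ N₂ ℓ q ∈ Set.Icc (δ ℓ) (M ℓ)} := by
  have hN : (0 : ℝ) < N₁ * N₂ := by
    have : 0 < N₁ := by omega
    have : 0 < N₂ := by omega
    positivity
  set R := (∑ ℓ ∈ grid N₁ N₂, max |δ ℓ| |M ℓ|) / (N₁ * N₂)
  refine (isCompact_univ_pi fun _ => isCompact_Icc (a := -R) (b := R)).of_isClosed_subset ?_ ?_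
  · simp only [Set.ofPred_and, Set.ofPred_forall]
    refine .inter (isClosed_iInter fun k => isClosed_eq (continuous_apply k)
      (continuous_apply (-k))) (.inter (isClosed_iInter fun k => isClosed_iInter fun _ =>
        isClosed_eq (continuous_apply k) continuous_const) (isClosed_iInter fun ℓ =>
          isClosed_iInter fun _ => isClosed_Icc.preimage (gridEval _ N₁ N₂ ℓ).continuous))
  · rintro q ⟨hq, hsupp, hmem⟩ k -
    rw [Set.mem_Icc, ← abs_le, le_div_iff₀ hN]
    exact (abs_mul_le_sum_abs_gridEval h₁ h₂ hq hsupp k).trans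
      (sum_le_sum fun ℓ hℓ => abs_le_max_abs_abs (hmem ℓ hℓ).1 (hmem ℓ hℓ).2)

end Coercivity

section DualFunctional

variable {n₁ n₂ N₁ N₂ m : ℕ} {a b : ℕ × ℕ → ℝ}

theorem continuousOn_dualFunctional {Λ : Finset (ℤ × ℤ)} :
    ContinuousOn (dualFunctional Λ N₁ N₂ m a b) (posTrigPolys Λ N₁ N₂) := by
  refine continuousOn_finsetSum _ fun ℓ hℓ => ContinuousOn.add ?_ ?_
  · exact continuousOn_const.div ((gridEval Λ N₁ N₂ ℓ).continuous.pow m).continuousOn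
      fun q hq => pow_ne_zero m (hq.2.2 ℓ hℓ).ne'
  · exact ((gridEval Λ N₁ N₂ ℓ).continuous.mul continuous_const).continuousOn

theorem strictConvexOn_dualFunctional (h₁ : 2 * n₁ < N₁) (h₂ : 2 * n₂ < N₂) (hm : m ≠ 0)
    (ha : ∀ ℓ ∈ grid N₁ N₂, 0 < a ℓ) :
    StrictConvexOn ℝ (posTrigPolys (freqBox n₁ n₂) N₁ N₂)
      (dualFunctional (freqBox n₁ n₂) N₁ N₂ m a b) :=
  strictConvexOn_sum_comp convex_posTrigPolys
    (fun ℓ hℓ => strictConvexOn_div_pow_add_mul (ha ℓ hℓ) hm (b ℓ))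
    (fun _ hq ℓ hℓ => hq.2.2 ℓ hℓ) fun _ ⟨hx, hxsupp, _⟩ _ ⟨hy, hysupp, _⟩ =>
      eq_of_forall_gridEval_eq h₁ h₂ hx hxsupp hy hysupp

theorem gridEval_mem_Icc_of_dualFunctional_le (hm : m ≠ 0) (ha : ∀ ℓ ∈ grid N₁ N₂, 0 < a ℓ)
    (hb : ∀ ℓ ∈ grid N₁ N₂, 0 < b ℓ) {Λ : Finset (ℤ × ℤ)} {q : ℤ × ℤ → ℝ}
    (hq : q ∈ posTrigPolys Λ N₁ N₂) {C : ℝ} (hC : dualFunctional Λ N₁ N₂ m a b q ≤ C)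
    {ℓ : ℕ × ℕ} (hℓ : ℓ ∈ grid N₁ N₂) :
    gridEval Λ N₁ N₂ ℓ q ∈ Set.Icc (min 1 (a ℓ / C)) (C / b ℓ) := by
  have hpos := hq.2.2
  refine mem_Icc_of_div_pow_add_mul_le (ha ℓ hℓ) (hb ℓ hℓ) hm (hpos ℓ hℓ) (le_trans ?_ hC)
  refine single_le_sum (f := fun ℓ => a ℓ / gridEval Λ N₁ N₂ ℓ q ^ m + gridEval Λ N₁ N₂ ℓ q * b ℓ)
    (fun ℓ' hℓ' => ?_) hℓ
  have := ha ℓ' hℓ'; have := hb ℓ' hℓ'; have := hpos ℓ' hℓ'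
  positivity

theorem existsUnique_isMinOn_dualFunctional (h₁ : 2 * n₁ < N₁) (h₂ : 2 * n₂ < N₂) (hm : m ≠ 0)
    (ha : ∀ ℓ ∈ grid N₁ N₂, 0 < a ℓ) (hb : ∀ ℓ ∈ grid N₁ N₂, 0 < b ℓ) :
    ∃! q, q ∈ posTrigPolys (freqBox n₁ n₂) N₁ N₂ ∧ ∀ q' ∈ posTrigPolys (freqBox n₁ n₂) N₁ N₂,
      dualFunctional (freqBox n₁ n₂) N₁ N₂ m a b q ≤
        dualFunctional (freqBox n₁ n₂) N₁ N₂ m a b q' := by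
  set B := posTrigPolys (freqBox n₁ n₂) N₁ N₂
  set F := dualFunctional (freqBox n₁ n₂) N₁ N₂ m a b
  -- the constant polynomial `Q ≡ 1`
  have hq₀ : Pi.single 0 1 ∈ B := single_zero_mem_posTrigPolys (by simp [freqBox])
  set C := F (Pi.single 0 1)
  have hC : 0 < C := sum_pos (fun ℓ hℓ => by
      have := ha ℓ hℓ; have := hb ℓ hℓ; have := hq₀.2.2 ℓ hℓ
      positivity) ⟨(0, 0), by simp [grid]; omega⟩
  obtain ⟨K, hK, hKB, hsub⟩ : ∃ K, IsCompact K ∧ K ⊆ B ∧ ∀ q ∈ B, F q ≤ C → q ∈ K :=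
    ⟨_, isCompact_setOf_gridEval_mem_Icc h₁ h₂ (fun ℓ => min 1 (a ℓ / C)) (fun ℓ => C / b ℓ),
      fun q ⟨hq, hsupp, hmem⟩ => ⟨hq, hsupp, fun ℓ hℓ =>
        (lt_min one_pos (div_pos (ha ℓ hℓ) hC)).trans_le (hmem ℓ hℓ).1⟩,
      fun q hq hqC =>
        ⟨hq.1, hq.2.1, fun ℓ hℓ => gridEval_mem_Icc_of_dualFunctional_le hm ha hb hq hqC hℓ⟩⟩
  exact existsUnique_isMinOn_of_strictConvexOn (strictConvexOn_dualFunctional h₁ h₂ hm ha) hq₀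
    hK hKB (continuousOn_dualFunctional.mono hKB) hsub

end DualFunctional

/-- The dual functional `J_ν` attains a unique minimizer over `B₊(N)`, the open set of
trigonometric polynomials with coefficient support `Λ` that are strictly positive on
the grid. -/
theorem stmt11 (n₁ n₂ N₁ N₂ : ℕ) (h₁ : 2 * n₁ < N₁) (h₂ : 2 * n₂ < N₂)
    (ν : ℕ) (hν : 1 < ν)
    (ζ : ℤ × ℤ → ℕ × ℕ → ℂ)
    (hζ : ∀ k ℓ, ζ k ℓ =
      Complex.exp (Complex.I * (k.1 : ℂ) * (ℓ.1 : ℂ) * (2 * Real.pi / N₁)) *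
      Complex.exp (Complex.I * (k.2 : ℂ) * (ℓ.2 : ℂ) * (2 * Real.pi / N₂)))
    (Φo : ℕ × ℕ → ℝ) (hΦo : ∀ ℓ ∈ Finset.range N₁ ×ˢ Finset.range N₂, 0 < Φo ℓ)
    (Ψ : ℕ × ℕ → ℝ) (hΨ : ∀ ℓ ∈ Finset.range N₁ ×ˢ Finset.range N₂, 0 < Ψ ℓ)
    (c : ℤ × ℤ → ℝ)
    (hc : ∀ k, (c k : ℂ) = (1 / ((N₁ : ℂ) * (N₂ : ℂ))) *
      ∑ ℓ ∈ Finset.range N₁ ×ˢ Finset.range N₂, ζ k ℓ * (Φo ℓ : ℂ))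
    (Qv : (ℤ × ℤ → ℝ) → ℕ × ℕ → ℝ)
    (hQv : ∀ q ℓ, Qv q ℓ =
      (∑ k ∈ Finset.Icc (-(n₁ : ℤ)) (n₁ : ℤ) ×ˢ Finset.Icc (-(n₂ : ℤ)) (n₂ : ℤ),
        (q k : ℂ) * ζ k ℓ).re)
    (B : Set (ℤ × ℤ → ℝ))
    (hB : B = {q | (∀ k, q k = q (-k)) ∧
      (∀ k ∉ Finset.Icc (-(n₁ : ℤ)) (n₁ : ℤ) ×ˢ Finset.Icc (-(n₂ : ℤ)) (n₂ : ℤ), q k = 0) ∧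
      ∀ ℓ ∈ Finset.range N₁ ×ˢ Finset.range N₂, 0 < Qv q ℓ})
    (J : (ℤ × ℤ → ℝ) → ℝ)
    (hJ : ∀ q, J q = (1 / ((N₁ : ℝ) * (N₂ : ℝ))) *
        ∑ ℓ ∈ Finset.range N₁ ×ˢ Finset.range N₂,
          (1 / ((ν : ℝ) - 1)) * Ψ ℓ / Qv q ℓ ^ (ν - 1)
      + ∑ k ∈ Finset.Icc (-(n₁ : ℤ)) (n₁ : ℤ) ×ˢ Finset.Icc (-(n₂ : ℤ)) (n₂ : ℤ),
          q k * c k) :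
    ∃! q : ℤ × ℤ → ℝ, q ∈ B ∧ ∀ q' ∈ B, J q ≤ J q' := by
  obtain rfl : ζ = gridChar N₁ N₂ := funext fun k => funext (hζ k)
  obtain rfl : Qv = fun q ℓ => gridEval (freqBox n₁ n₂) N₁ N₂ ℓ q :=
    funext fun q => funext fun ℓ => (hQv q ℓ).trans (gridEval_apply ℓ q).symm
  have hν' : (0 : ℝ) < ν - 1 := by
    have : (1 : ℝ) < ν := by exact_mod_cast hν
    linarith
  have hN : (0 : ℝ) < 1 / ((N₁ : ℝ) * N₂) := by
    have : 0 < N₁ := by omega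
    have : 0 < N₂ := by omega
    positivity
  have hJ' : J = dualFunctional (freqBox n₁ n₂) N₁ N₂ (ν - 1)
      (fun ℓ => 1 / ((N₁ : ℝ) * N₂) * (1 / ((ν : ℝ) - 1) * Ψ ℓ))
      (fun ℓ => 1 / ((N₁ : ℝ) * N₂) * Φo ℓ) := by
    funext q
    rw [hJ, sum_mul_eq_sum_gridEval_mul hc, mul_sum, mul_sum, dualFunctional,
      ← sum_add_distrib]
    exact sum_congr rfl fun ℓ _ => by ring
  subst hB hJ'
  exact existsUnique_isMinOn_dualFunctional h₁ h₂ (by omega)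
    (fun ℓ hℓ => mul_pos hN (mul_pos (one_div_pos.2 hν') (hΨ ℓ hℓ)))
    (fun ℓ hℓ => mul_pos hN (hΦo ℓ hℓ))
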